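/- Let U be a finite set partitioned into G_1, …, G_k and let g : 2^U → ℝ≥0 be monotone and subadditive with g(∅) = 0. For S ⊆ U let 𝒫(S) := {T ⊆ S : T ∩ G_i ∈ {∅, S ∩ G_i} for every i ∈ [k]} be the player-respecting subsets of S; a player-respecting fractional cover of S is x : 𝒫(S) → ℝ≥0 with Σ_{T ∈ 𝒫(S), e ∈ T} x_T = 1 for every e ∈ S; a function h : 2^U → ℝ≥0 is player-respecting XOS if for every S ⊆ U and every player-respecting fractional cover x of S, Σ_{T∈𝒫(S)} h(T)·x_T ≥ h(S). Define g_X(S) := inf{ Σ_{T∈𝒫(S)} g(T)·x_T : x a player-respecting fractional cover of S }. Then: (i) g_X(S) ≤ g(S) for every S ⊆ U; (ii) g_X is player-respecting XOS; and (iii) every player-respecting XOS function h with h(S) ≤ g(S) for all S ⊆ U satisfies h(S) ≤ g_X(S) for all S ⊆ U. -/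
import Mathlib


open Finset

/-- The player-respecting subsets of `S`: those `T ⊆ S` with
`T ∩ G_i ∈ {∅, S ∩ G_i}` for every player `i`. -/
def prSubsets {n k : ℕ} (G : Fin k → Finset (Fin n)) (S : Finset (Fin n)) :
    Finset (Finset (Fin n)) :=
  S.powerset.filter fun T => ∀ i : Fin k, T ∩ G i = ∅ ∨ T ∩ G i = S ∩ G i

/-- A player-respecting fractional cover of `S`: nonnegative weights on the
player-respecting subsets of `S` with `∑_{T ∋ e} x_T = 1` for every `e ∈ S`. -/
def IsPRCover {n k : ℕ} (G : Fin k → Finset (Fin n)) (S : Finset (Fin n))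
    (x : Finset (Fin n) → ℝ) : Prop :=
  (∀ T, 0 ≤ x T) ∧
  ∀ e ∈ S, (∑ T ∈ (prSubsets G S).filter (fun T => e ∈ T), x T) = 1

/-- A function is player-respecting XOS if every player-respecting fractional cover of
any `S` has value at least `h S`. -/
def IsPRXOS {n k : ℕ} (G : Fin k → Finset (Fin n)) (h : Finset (Fin n) → ℝ) : Prop :=
  ∀ S : Finset (Fin n), ∀ x : Finset (Fin n) → ℝ, IsPRCover G S x →
    h S ≤ ∑ T ∈ prSubsets G S, h T * x T

/-- `g_X S`: the optimal value of the player-respecting fractional-cover LP of `S`. -/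
noncomputable def gX {n k : ℕ} (G : Fin k → Finset (Fin n))
    (g : Finset (Fin n) → ℝ) (S : Finset (Fin n)) : ℝ :=
  sInf {t : ℝ | ∃ x : Finset (Fin n) → ℝ, IsPRCover G S x ∧
    t = ∑ T ∈ prSubsets G S, g T * x T}


section Aux
variable {n k : ℕ} (G : Fin k → Finset (Fin n))

lemma mem_prSubsets_self (S : Finset (Fin n)) : S ∈ prSubsets G S := by
  unfold prSubsets
  rw [mem_filter, mem_powerset]
  exact ⟨subset_rfl, fun i => Or.inr rfl⟩

lemma prSubsets_subset {S T : Finset (Fin n)} (h : T ∈ prSubsets G S) : T ⊆ S := by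
  simp only [prSubsets, mem_filter, mem_powerset] at h; exact h.1

lemma prSubsets_trans {S T : Finset (Fin n)} (hT : T ∈ prSubsets G S) :
    prSubsets G T ⊆ prSubsets G S := by
  intro R hR
  simp only [prSubsets, mem_filter, mem_powerset] at *
  obtain ⟨hTS, hTi⟩ := hT
  obtain ⟨hRT, hRi⟩ := hR
  refine ⟨hRT.trans hTS, fun i => ?_⟩
  rcases hRi i with h | h
  · exact Or.inl h
  · rcases hTi i with h' | h'
    · exact Or.inl (h.trans h')
    · exact Or.inr (h.trans h')

/-- indicator cover -/
lemma ind_cover (S : Finset (Fin n)) :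
    IsPRCover G S (fun T => if T = S then 1 else 0) := by
  constructor
  · intro T; positivity
  · intro e he
    rw [Finset.sum_ite_eq' _ S (fun _ => (1:ℝ))]
    simp [mem_prSubsets_self, he]

lemma ind_val (g : Finset (Fin n) → ℝ) (S : Finset (Fin n)) :
    (∑ T ∈ prSubsets G S, g T * (if T = S then 1 else 0)) = g S := by
  simp only [mul_ite, mul_one, mul_zero]
  rw [Finset.sum_ite_eq' _ S g]
  simp [mem_prSubsets_self]

lemma gX_set_nonempty (g : Finset (Fin n) → ℝ) (S : Finset (Fin n)) :
    {t : ℝ | ∃ x : Finset (Fin n) → ℝ, IsPRCover G S x ∧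
      t = ∑ T ∈ prSubsets G S, g T * x T}.Nonempty :=
  ⟨g S, fun T => if T = S then 1 else 0, ind_cover G S, (ind_val G g S).symm⟩

lemma gX_set_bdd (g : Finset (Fin n) → ℝ) (hgnn : ∀ S, 0 ≤ g S) (S : Finset (Fin n)) :
    0 ∈ lowerBounds {t : ℝ | ∃ x : Finset (Fin n) → ℝ, IsPRCover G S x ∧
      t = ∑ T ∈ prSubsets G S, g T * x T} := by
  rintro t ⟨x, hx, rfl⟩
  exact Finset.sum_nonneg fun T _ => mul_nonneg (hgnn T) (hx.1 T)

end Aux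

lemma gX_nonneg {n k : ℕ} (G : Fin k → Finset (Fin n)) (g : Finset (Fin n) → ℝ)
    (hgnn : ∀ S, 0 ≤ g S) (S : Finset (Fin n)) : 0 ≤ gX G g S :=
  le_csInf (gX_set_nonempty G g S) (gX_set_bdd G g hgnn S)


/-- For a monotone, subadditive, normalized `g`:
(i) `g_X S ≤ g S` for every `S`; (ii) `g_X` is player-respecting XOS; and
(iii) every player-respecting XOS function `h` (with values in `ℝ≥0`) satisfying
`h ≤ g` pointwise also satisfies `h ≤ g_X` pointwise. -/
theorem stmt19 {n k : ℕ} (hk : 0 < k) (G : Fin k → Finset (Fin n))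
    (hdisj : ∀ i j : Fin k, i ≠ j → Disjoint (G i) (G j))
    (hcover : Finset.univ.biUnion G = (Finset.univ : Finset (Fin n)))
    (g : Finset (Fin n) → ℝ) (hg0 : g ∅ = 0) (hgnn : ∀ S, 0 ≤ g S)
    (hgmono : ∀ S T : Finset (Fin n), S ⊆ T → g S ≤ g T)
    (hgsub : ∀ S T : Finset (Fin n), g (S ∪ T) ≤ g S + g T) :
    (∀ S : Finset (Fin n), gX G g S ≤ g S) ∧
    IsPRXOS G (gX G g) ∧
    (∀ h : Finset (Fin n) → ℝ, (∀ S, 0 ≤ h S) → IsPRXOS G h →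
      (∀ S, h S ≤ g S) → ∀ S, h S ≤ gX G g S) := by
  refine ⟨?_, ?_, ?_⟩
  · -- (i)
    intro S
    exact csInf_le ⟨0, gX_set_bdd G g hgnn S⟩
      ⟨fun T => if T = S then 1 else 0, ind_cover G S, (ind_val G g S).symm⟩
  · -- (ii)
    intro S x hx
    refine le_of_forall_pos_le_add (fun ε hε => ?_)
    set C := ∑ T ∈ prSubsets G S, x T with hC
    have hC0 : 0 ≤ C := Finset.sum_nonneg fun T _ => hx.1 T
    set δ := ε / (C + 1) with hδ
    have hδ0 : 0 < δ := div_pos hε (by linarith)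
    have hchoice : ∀ T : Finset (Fin n), ∃ y, IsPRCover G T y ∧
        (∑ R ∈ prSubsets G T, g R * y R) < gX G g T + δ := by
      intro T
      obtain ⟨t, ht, htlt⟩ := Real.lt_sInf_add_pos (gX_set_nonempty G g T) hδ0
      obtain ⟨y, hy, rfl⟩ := ht
      exact ⟨y, hy, htlt⟩
    choose y hy hyval using hchoice
    set z : Finset (Fin n) → ℝ := fun R =>
      ∑ T ∈ prSubsets G S, x T * (if R ∈ prSubsets G T then y T R else 0) with hz
    have hznn : ∀ R, 0 ≤ z R := by
      intro R
      refine Finset.sum_nonneg fun T _ => mul_nonneg (hx.1 T) ?_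
      by_cases hR : R ∈ prSubsets G T <;> simp [hR, (hy T).1 R]
    have key : ∀ T ∈ prSubsets G S, ∀ e ∈ S,
        (∑ R ∈ ((prSubsets G S).filter (fun R => e ∈ R)),
          (if R ∈ prSubsets G T then y T R else 0)) = if e ∈ T then 1 else 0 := by
      intro T hT e he
      rw [Finset.sum_ite_mem]
      have hset : (prSubsets G S).filter (fun R => e ∈ R) ∩ prSubsets G T
          = (prSubsets G T).filter (fun R => e ∈ R) := by
        ext R
        simp only [mem_inter, mem_filter]
        constructor
        · rintro ⟨⟨_, heR⟩, hRT⟩; exact ⟨hRT, heR⟩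
        · rintro ⟨hRT, heR⟩; exact ⟨⟨prSubsets_trans G hT hRT, heR⟩, hRT⟩
      rw [hset]
      by_cases heT : e ∈ T
      · rw [(hy T).2 e heT, if_pos heT]
      · rw [if_neg heT]
        refine Finset.sum_eq_zero fun R hR => ?_
        rw [mem_filter] at hR
        exact absurd (prSubsets_subset G hR.1 hR.2) heT
    have hzcov : IsPRCover G S z := by
      refine ⟨hznn, fun e he => ?_⟩
      calc (∑ R ∈ (prSubsets G S).filter (fun R => e ∈ R), z R)
          = ∑ T ∈ prSubsets G S, ∑ R ∈ (prSubsets G S).filter (fun R => e ∈ R),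
              x T * (if R ∈ prSubsets G T then y T R else 0) := Finset.sum_comm
        _ = ∑ T ∈ prSubsets G S, x T * (if e ∈ T then 1 else 0) := by
              refine Finset.sum_congr rfl fun T hT => ?_
              rw [← Finset.mul_sum, key T hT e he]
        _ = ∑ T ∈ (prSubsets G S).filter (fun T => e ∈ T), x T := by
              rw [Finset.sum_filter]
              refine Finset.sum_congr rfl fun T _ => ?_
              by_cases heT : e ∈ T <;> simp [heT]
        _ = 1 := hx.2 e he
    have hval : (∑ R ∈ prSubsets G S, g R * z R)
        = ∑ T ∈ prSubsets G S, x T * ∑ R ∈ prSubsets G T, g R * y T R := by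
      calc (∑ R ∈ prSubsets G S, g R * z R)
          = ∑ R ∈ prSubsets G S, ∑ T ∈ prSubsets G S,
              x T * (g R * (if R ∈ prSubsets G T then y T R else 0)) := by
            refine Finset.sum_congr rfl fun R _ => ?_
            rw [hz, Finset.mul_sum]
            exact Finset.sum_congr rfl fun T _ => by ring
        _ = ∑ T ∈ prSubsets G S, ∑ R ∈ prSubsets G S,
              x T * (g R * (if R ∈ prSubsets G T then y T R else 0)) := Finset.sum_comm
        _ = ∑ T ∈ prSubsets G S, x T * ∑ R ∈ prSubsets G T, g R * y T R := by
            refine Finset.sum_congr rfl fun T hT => ?_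
            rw [← Finset.mul_sum]
            congr 1
            have : ∀ R, g R * (if R ∈ prSubsets G T then y T R else 0)
                = if R ∈ prSubsets G T then g R * y T R else 0 := fun R => by
              by_cases hR : R ∈ prSubsets G T <;> simp [hR]
            simp_rw [this]
            rw [Finset.sum_ite_mem, Finset.inter_eq_right.mpr (prSubsets_trans G hT)]
    have h1 : gX G g S ≤ ∑ R ∈ prSubsets G S, g R * z R :=
      csInf_le ⟨0, gX_set_bdd G g hgnn S⟩ ⟨z, hzcov, rfl⟩
    have h2 : (∑ T ∈ prSubsets G S, x T * ∑ R ∈ prSubsets G T, g R * y T R)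
        ≤ ∑ T ∈ prSubsets G S, x T * (gX G g T + δ) :=
      Finset.sum_le_sum fun T _ =>
        mul_le_mul_of_nonneg_left (le_of_lt (hyval T)) (hx.1 T)
    have h3 : (∑ T ∈ prSubsets G S, x T * (gX G g T + δ))
        = (∑ T ∈ prSubsets G S, gX G g T * x T) + δ * C := by
      rw [hC, Finset.mul_sum, ← Finset.sum_add_distrib]
      exact Finset.sum_congr rfl fun T _ => by ring
    have h4 : δ * C ≤ ε := by
      have : δ * (C + 1) = ε := by
        rw [hδ]; field_simp
      nlinarith
    calc gX G g S ≤ ∑ R ∈ prSubsets G S, g R * z R := h1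
      _ = _ := hval
      _ ≤ _ := h2
      _ = (∑ T ∈ prSubsets G S, gX G g T * x T) + δ * C := h3
      _ ≤ (∑ T ∈ prSubsets G S, gX G g T * x T) + ε := by linarith
  · -- (iii)
    intro h hnn hxos hle S
    refine le_csInf (gX_set_nonempty G g S) ?_
    rintro t ⟨x, hx, rfl⟩
    calc h S ≤ ∑ T ∈ prSubsets G S, h T * x T := hxos S x hx
      _ ≤ ∑ T ∈ prSubsets G S, g T * x T :=
        Finset.sum_le_sum fun T _ => mul_le_mul_of_nonneg_right (hle T) (hx.1 T)
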